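/- arXiv:2601.22968 — 7 statements merged into one kernel-verified Lean document; each statement's English description precedes it below -/
import Mathlib

section
/- Let n, m, r be natural numbers and let f : Fin n → Fin m and g : Fin m → Fin r be monotone functions. Then E (g ∘ f) = (E f) ∘ (E g) as functions Fin (r+1) → Fin (n+1). (This expresses the contravariant functoriality of the paper's décalage-like functor e : Δᵒᵖ → Δ.) -/
/-- The décalage-like shift of a map `f : Fin n → Fin m`:
`(E f) i` is the number of indices `k : Fin n` with `(f k : ℕ) < (i : ℕ)`. -/
def E {n m : ℕ} (f : Fin n → Fin m) : Fin (m + 1) → Fin (n + 1) :=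
  fun i =>
    ⟨(Finset.univ.filter (fun k : Fin n => (f k : ℕ) < (i : ℕ))).card,
      Nat.lt_succ_of_le ((Finset.card_filter_le _ _).trans (by simp))⟩

lemma mem_iff_lt_card {m : ℕ} (S : Finset (Fin m))
    (hS : ∀ j j' : Fin m, j' ≤ j → j ∈ S → j' ∈ S) (x : Fin m) :
    x ∈ S ↔ (x : ℕ) < S.card := by
  constructor
  · intro hx
    have hsub : Finset.Iic x ⊆ S := fun j hj => hS x j (Finset.mem_Iic.mp hj) hx
    have := Finset.card_le_card hsub
    rw [Fin.card_Iic] at this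
    omega
  · intro hlt
    by_contra hx
    have hsub : S ⊆ Finset.Iio x := by
      intro j hj
      rw [Finset.mem_Iio]
      by_contra hjx
      exact hx (hS j x (le_of_not_gt hjx) hj)
    have := Finset.card_le_card hsub
    rw [Fin.card_Iio] at this
    omega

theorem stmt0 {n m r : ℕ} (f : Fin n → Fin m) (g : Fin m → Fin r)
    (hf : Monotone f) (hg : Monotone g) :
    E (g ∘ f) = (E f) ∘ (E g) := by
  funext i
  apply Fin.ext
  simp only [E, Function.comp]
  congr 1
  apply Finset.filter_congr
  intro k _
  have h := mem_iff_lt_card (Finset.univ.filter (fun j : Fin m => (g j : ℕ) < (i : ℕ)))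
    (fun j j' hle hj => by
      simp only [Finset.mem_filter, Finset.mem_univ, true_and] at hj ⊢
      exact lt_of_le_of_lt (hg hle) hj) (f k)
  simp only [Finset.mem_filter, Finset.mem_univ, true_and] at h
  exact h
end

section
/- Let n, m be natural numbers and let f, g : Fin n → Fin m be monotone functions. If E f = E g, then f = g. (This is the faithfulness of the paper's décalage-like functor e : Δᵒᵖ → Δ, Proposition 7.3.) -/
lemma E_key {n m : ℕ} (f : Fin n → Fin m) (hf : Monotone f) (k : Fin n) (i : Fin (m + 1)) :
    (f k : ℕ) < (i : ℕ) ↔ (k : ℕ) < ((E f i : Fin (n+1)) : ℕ) := by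
  set S := Finset.univ.filter (fun j : Fin n => (f j : ℕ) < (i : ℕ)) with hS
  have hmem : ∀ j : Fin n, j ∈ S ↔ (f j : ℕ) < (i : ℕ) := by
    intro j; simp [hS]
  constructor
  · intro hk
    have hsub : Finset.Iic k ⊆ S := by
      intro j hj
      rw [Finset.mem_Iic] at hj
      rw [hmem]
      exact lt_of_le_of_lt (by exact_mod_cast hf hj) hk
    have := Finset.card_le_card hsub
    rw [Fin.card_Iic] at this
    exact lt_of_lt_of_le (Nat.lt_succ_self _) this
  · intro hk
    by_contra hfk
    have hsub : S ⊆ Finset.Iio k := by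
      intro j hj
      rw [hmem] at hj
      rw [Finset.mem_Iio]
      by_contra hjk
      push_neg at hjk
      exact hfk (lt_of_le_of_lt (by exact_mod_cast hf hjk) hj)
    have := Finset.card_le_card hsub
    rw [Fin.card_Iio] at this
    exact absurd hk (not_lt.mpr this)

theorem stmt2 {n m : ℕ} (f g : Fin n → Fin m) (hf : Monotone f) (hg : Monotone g)
    (h : E f = E g) : f = g := by
  funext k
  have key : ∀ i : Fin (m + 1), (f k : ℕ) < (i : ℕ) ↔ (g k : ℕ) < (i : ℕ) := by
    intro i
    rw [E_key f hf k i, E_key g hg k i, h]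
  have hfk : (f k : ℕ) < m := (f k).isLt
  have hgk : (g k : ℕ) < m := (g k).isLt
  have h1 : (g k : ℕ) ≤ (f k : ℕ) := by
    have := (key ⟨(f k : ℕ) + 1, by omega⟩).mp (by simp)
    simpa [Nat.lt_succ_iff] using this
  have h2 : (f k : ℕ) ≤ (g k : ℕ) := by
    have := (key ⟨(g k : ℕ) + 1, by omega⟩).mpr (by simp)
    simpa [Nat.lt_succ_iff] using this
  exact Fin.ext (le_antisymm h2 h1)
end

section
/- Let n, m be natural numbers and let F : Fin (m+1) → Fin (n+1) be a monotone function with F 0 = 0 and F (Fin.last m) = Fin.last n. Then there exists a unique monotone function f : Fin n → Fin m with E f = F; explicitly, f k is the least i : Fin m such that (k : ℕ) < (F (i.succ) : ℕ) (where i.succ : Fin (m+1)). (This identifies the image of the paper's functor e : Δᵒᵖ → Δ with the endpoint-preserving maps, Proposition 7.3.) -/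
lemma card_lt_aux {n c : ℕ} (hc : c ≤ n) :
    (Finset.univ.filter (fun k : Fin n => (k : ℕ) < c)).card = c := by
  rcases eq_or_lt_of_le hc with rfl | h
  · rw [Finset.filter_true_of_mem (fun k _ => k.isLt)]; simp
  · have h2 : Finset.univ.filter (fun k : Fin n => (k : ℕ) < c) = Finset.Iio ⟨c, h⟩ := by
      ext k; simp [Finset.mem_Iio, Fin.lt_def]
    rw [h2, Fin.card_Iio]

theorem stmt3 {n m : ℕ} (F : Fin (m + 1) → Fin (n + 1)) (hF : Monotone F)
    (h0 : F 0 = 0) (hlast : F (Fin.last m) = Fin.last n) :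
    (∃! f : Fin n → Fin m, Monotone f ∧ E f = F) ∧
      (∀ f : Fin n → Fin m, Monotone f → E f = F →
        ∀ k : Fin n, IsLeast {i : Fin m | (k : ℕ) < (F i.succ : ℕ)} (f k)) := by
  -- Part 2 first: any monotone f with E f = F has f k least.
  have part2 : ∀ f : Fin n → Fin m, Monotone f → E f = F →
      ∀ k : Fin n, IsLeast {i : Fin m | (k : ℕ) < (F i.succ : ℕ)} (f k) := by
    intro f hf hEf k
    constructor
    · -- k < F (f k).succ
      rw [← hEf]
      show (k : ℕ) < (Finset.univ.filter
        (fun k' : Fin n => (f k' : ℕ) < ((f k).succ : ℕ))).card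
      have hsub : Finset.univ.filter (fun k' : Fin n => (k' : ℕ) < (k : ℕ) + 1)
          ⊆ Finset.univ.filter (fun k' : Fin n => (f k' : ℕ) < ((f k).succ : ℕ)) := by
        intro k' hk'
        simp only [Finset.mem_filter, Finset.mem_univ, true_and] at hk' ⊢
        have : k' ≤ k := by
          rw [Fin.le_def]; omega
        have := hf this
        rw [Fin.le_def] at this
        simp [Fin.val_succ]
        omega
      have hc := Finset.card_le_card hsub
      rw [card_lt_aux (by omega : (k : ℕ) + 1 ≤ n)] at hc
      omega
    · -- lower bound
      intro i hi
      simp only [Set.mem_setOf_eq, ← hEf] at hi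
      change (k : ℕ) < (Finset.univ.filter
        (fun k' : Fin n => (f k' : ℕ) < (i.succ : ℕ))).card at hi
      by_contra hcon
      rw [Fin.le_def, not_le] at hcon
      have hsub : Finset.univ.filter (fun k' : Fin n => (f k' : ℕ) < (i.succ : ℕ))
          ⊆ Finset.univ.filter (fun k' : Fin n => (k' : ℕ) < (k : ℕ)) := by
        intro k' hk'
        simp only [Finset.mem_filter, Finset.mem_univ, true_and] at hk' ⊢
        by_contra h
        push_neg at h
        have : k ≤ k' := by rw [Fin.le_def]; omega
        have := hf this
        rw [Fin.le_def] at this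
        simp [Fin.val_succ] at hk'
        omega
      have hc := Finset.card_le_card hsub
      rw [card_lt_aux (by omega : (k : ℕ) ≤ n)] at hc
      omega
  refine ⟨?_, part2⟩
  -- existence of the candidate f
  have hmem : ∀ k : Fin n, ∃ i : Fin m, (k : ℕ) < (F i.succ : ℕ) := by
    intro k
    have hn : 0 < n := k.pos
    have hm : 0 < m := by
      rcases Nat.eq_zero_or_pos m with hm0 | hm0
      · subst hm0
        have : F 0 = Fin.last n := by
          rw [← hlast]; congr 1
        rw [h0] at this
        have := congrArg Fin.val this
        simp [Fin.last] at this
        omega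
      · exact hm0
    refine ⟨⟨m - 1, by omega⟩, ?_⟩
    have : (⟨m - 1, by omega⟩ : Fin m).succ = Fin.last m := by
      ext; simp [Fin.val_succ, Fin.last]; omega
    rw [this, hlast]
    simp [Fin.last]
  set S : Fin n → Finset (Fin m) :=
    fun k => Finset.univ.filter (fun i : Fin m => (k : ℕ) < (F i.succ : ℕ)) with hS
  have hSne : ∀ k : Fin n, (S k).Nonempty := by
    intro k
    obtain ⟨i, hi⟩ := hmem k
    exact ⟨i, by simp [hS, hi]⟩
  set f : Fin n → Fin m := fun k => (S k).min' (hSne k) with hf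
  have hfmem : ∀ k : Fin n, (k : ℕ) < (F (f k).succ : ℕ) := by
    intro k
    have := Finset.min'_mem (S k) (hSne k)
    simpa [hS] using this
  have hfle : ∀ (k : Fin n) (i : Fin m), (k : ℕ) < (F i.succ : ℕ) → f k ≤ i := by
    intro k i hi
    exact Finset.min'_le _ _ (by simp [hS, hi])
  have hmono : Monotone f := by
    intro k k' hkk'
    apply Finset.le_min'
    intro i hi
    simp only [hS, Finset.mem_filter, Finset.mem_univ, true_and] at hi
    apply Finset.min'_le
    simp only [hS, Finset.mem_filter, Finset.mem_univ, true_and]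
    rw [Fin.le_def] at hkk'
    omega
  -- key equivalence
  have hkey : ∀ (k : Fin n) (i : Fin (m + 1)), (f k : ℕ) < (i : ℕ) ↔ (k : ℕ) < (F i : ℕ) := by
    intro k i
    constructor
    · intro h
      have h1 : (f k).succ ≤ i := by
        rw [Fin.le_def]; simp [Fin.val_succ]; omega
      have h2 := hF h1
      rw [Fin.le_def] at h2
      have := hfmem k
      omega
    · intro h
      have hi0 : i ≠ 0 := by
        intro h'
        rw [h', h0] at h
        simp at h
      obtain ⟨j, rfl⟩ := Fin.eq_succ_of_ne_zero hi0
      have := hfle k j h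
      rw [Fin.le_def] at this
      simp [Fin.val_succ]
      omega
  have hEfF : E f = F := by
    funext i
    apply Fin.ext
    show (Finset.univ.filter (fun k : Fin n => (f k : ℕ) < (i : ℕ))).card = (F i : ℕ)
    have : Finset.univ.filter (fun k : Fin n => (f k : ℕ) < (i : ℕ))
        = Finset.univ.filter (fun k : Fin n => (k : ℕ) < (F i : ℕ)) := by
      apply Finset.filter_congr
      intro k _
      simp [hkey k i]
    rw [this, card_lt_aux]
    · exact Nat.lt_succ_iff.mp (F i).isLt
  refine ⟨f, ⟨hmono, hEfF⟩, ?_⟩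
  intro g ⟨hgmono, hgE⟩
  funext k
  exact (part2 g hgmono hgE k).unique (part2 f hmono hEfF k)
end

section
/- For all natural numbers n, m, the assignment f ↦ E f is a bijection from the set of monotone functions Fin n → Fin m onto the set of monotone functions Fin (m+1) → Fin (n+1) that send 0 to 0 and Fin.last m to Fin.last n. (Proposition 7.3: the functor e : Δᵒᵖ → Δ is faithful with image the subcategory of Δ on the objects [n], n ≥ 1, whose morphisms are the endpoint-preserving maps.) -/
/-!
Both `f` and `E f` are determined by the relation `f k < i`: for monotone `f` one has
`f k < i ↔ k < E f i`. An endpoint-preserving monotone `F` determines the inverse map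
`k ↦ #{j : Fin m | F j.succ ≤ k}`, which satisfies the same relation with `F` in place of `E f`.
-/

open Finset

/-- A down-closed subset of `Fin N` is an initial segment, of length its cardinality. -/
lemma Fin.val_lt_card_filter_iff {N : ℕ} {p : Fin N → Prop} [DecidablePred p]
    (hp : Antitone p) (j : Fin N) : (j : ℕ) < #(univ.filter p) ↔ p j := by
  constructor
  · intro hj
    by_contra hpj
    have hsub : univ.filter p ⊆ Iio j := fun x hx => by
      simp only [mem_filter, mem_univ, true_and] at hx
      exact mem_Iio.2 (lt_of_not_ge fun hjx => hpj (hp hjx hx))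
    have := card_le_card hsub
    rw [Fin.card_Iio] at this
    omega
  · intro hpj
    have hsub : Iic j ⊆ univ.filter p := fun x hx => by
      simpa using hp (mem_Iic.1 hx) hpj
    have := card_le_card hsub
    rw [Fin.card_Iic] at this
    omega

lemma Fin.eq_of_forall_val_lt_iff {n : ℕ} {a b : Fin (n + 1)}
    (h : ∀ k : Fin n, (k : ℕ) < a ↔ (k : ℕ) < b) : a = b := by
  refine Fin.ext (le_antisymm ?_ ?_)
  · by_contra hba
    have := h ⟨b, by omega⟩
    simp only at this
    omega
  · by_contra hab
    have := h ⟨a, by omega⟩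
    simp only at this
    omega

lemma Fin.eq_of_forall_lt_val_iff {m : ℕ} {a b : Fin m}
    (h : ∀ i : Fin (m + 1), (a : ℕ) < i ↔ (b : ℕ) < i) : a = b := by
  refine Fin.ext (le_antisymm ?_ ?_)
  · by_contra hba
    have := h ⟨b + 1, by omega⟩
    simp only at this
    omega
  · by_contra hab
    have := h ⟨a + 1, by omega⟩
    simp only at this
    omega

section Shift

variable {n m : ℕ}

lemma E_monotone (f : Fin n → Fin m) : Monotone (E f) := fun i _ hij =>
  Fin.le_iff_val_le_val.2 <| card_le_card <| monotone_filter_right univ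
    fun k _ (hk : (f k : ℕ) < i) => hk.trans_le hij

lemma E_zero (f : Fin n → Fin m) : E f 0 = 0 := by
  simp [E]

lemma E_last (f : Fin n → Fin m) : E f (Fin.last m) = Fin.last n := by
  simp [E, Fin.ext_iff, Fin.is_lt]

lemma lt_E_iff {f : Fin n → Fin m} (hf : Monotone f) (i : Fin (m + 1)) (k : Fin n) :
    (k : ℕ) < E f i ↔ (f k : ℕ) < i :=
  Fin.val_lt_card_filter_iff (p := fun k => (f k : ℕ) < i)
    (fun _ _ hkk' h => lt_of_le_of_lt (hf hkk') h) k

lemma E_injOn : Set.InjOn E {f : Fin n → Fin m | Monotone f} := fun f hf g hg h =>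
  funext fun k => Fin.eq_of_forall_lt_val_iff fun i => by
    rw [← lt_E_iff hf, ← lt_E_iff hg, h]

lemma exists_val_lt_apply_succ {F : Fin (m + 1) → Fin (n + 1)} (h0 : F 0 = 0)
    (hl : F (Fin.last m) = Fin.last n) (k : Fin n) : ∃ j : Fin m, (k : ℕ) < F j.succ := by
  have hlast : Fin.last m ≠ 0 := fun h => by
    rw [h, h0] at hl
    have hn := congrArg Fin.val hl
    rw [Fin.val_zero, Fin.val_last] at hn
    exact k.pos.ne hn
  obtain ⟨j, hj⟩ := Fin.exists_succ_eq.2 hlast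
  exact ⟨j, by rw [hj, hl]; simp⟩

def shiftInv (F : Fin (m + 1) → Fin (n + 1)) (h0 : F 0 = 0)
    (hl : F (Fin.last m) = Fin.last n) (k : Fin n) : Fin m :=
  ⟨#{j : Fin m | (F j.succ : ℕ) ≤ k},
    by obtain ⟨j, hj⟩ := exists_val_lt_apply_succ h0 hl k
       refine (card_lt_card ?_).trans_eq (card_fin m)
       exact filter_ssubset.2 ⟨j, mem_univ _, not_le.2 hj⟩⟩

variable {F : Fin (m + 1) → Fin (n + 1)} (h0 : F 0 = 0) (hl : F (Fin.last m) = Fin.last n)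

lemma shiftInv_monotone : Monotone (shiftInv F h0 hl) := fun k _ hkk' =>
  Fin.le_iff_val_le_val.2 <| card_le_card <| monotone_filter_right univ
    fun (j : Fin m) _ (hj : (F j.succ : ℕ) ≤ k) => hj.trans hkk'

lemma shiftInv_lt_iff (hF : Monotone F) (i : Fin (m + 1)) (k : Fin n) :
    (shiftInv F h0 hl k : ℕ) < i ↔ (k : ℕ) < F i := by
  induction i using Fin.cases with
  | zero => simp [h0]
  | succ j =>
    have hj := Fin.val_lt_card_filter_iff
      (p := fun j : Fin m => (F j.succ : ℕ) ≤ k)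
      (fun _ _ hjj' h => le_trans (hF (Fin.succ_le_succ_iff.2 hjj')) h) j
    change j < (shiftInv F h0 hl k : ℕ) ↔ _ at hj
    simp only [Fin.val_succ]
    omega

lemma E_shiftInv (hF : Monotone F) : E (shiftInv F h0 hl) = F :=
  funext fun i => Fin.eq_of_forall_val_lt_iff fun k => by
    rw [lt_E_iff (shiftInv_monotone h0 hl), shiftInv_lt_iff h0 hl hF]

end Shift

theorem stmt4 (n m : ℕ) :
    ∃ e : {f : Fin n → Fin m // Monotone f} ≃
        {F : Fin (m + 1) → Fin (n + 1) //
          Monotone F ∧ F 0 = 0 ∧ F (Fin.last m) = Fin.last n},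
      ∀ f : {f : Fin n → Fin m // Monotone f},
        ((e f : {F : Fin (m + 1) → Fin (n + 1) //
          Monotone F ∧ F 0 = 0 ∧ F (Fin.last m) = Fin.last n}) :
            Fin (m + 1) → Fin (n + 1)) = E f.1 := by
  refine ⟨⟨fun f => ⟨E f.1, E_monotone f.1, E_zero f.1, E_last f.1⟩,
    fun F => ⟨shiftInv F.1 F.2.2.1 F.2.2.2, shiftInv_monotone F.2.2.1 F.2.2.2⟩,
    fun f => ?_, fun F => ?_⟩, fun f => rfl⟩
  · exact Subtype.ext <| E_injOn (shiftInv_monotone (E_zero f.1) (E_last f.1)) f.2 <|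
      E_shiftInv (E_zero f.1) (E_last f.1) (E_monotone f.1)
  · exact Subtype.ext <| E_shiftInv F.2.2.1 F.2.2.2 F.2.1
end

section
/- Let n be a natural number and i : Fin (n+2). Let δᵢ : Fin (n+1) → Fin (n+2) be the monotone injection whose image omits i (i.e., Fin.succAbove i, the underlying map of the face map δ i of the simplex category), and let σᵢ : Fin (n+3) → Fin (n+2) be the monotone surjection defined by σᵢ j = j if (j : ℕ) ≤ (i : ℕ) and σᵢ j = j − 1 otherwise (the underlying map of the degeneracy map σ i). Then E δᵢ = σᵢ. (The paper's functor e : Δᵒᵖ → Δ sends face maps to degeneracy maps.) -/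
/-- The underlying map of the degeneracy `σᵢ : [n+2] → [n+1]` of the simplex category:
`σᵢ j = j` if `j ≤ i` and `σᵢ j = j - 1` otherwise. -/
def sigmaMap {n : ℕ} (i : Fin (n + 2)) : Fin (n + 3) → Fin (n + 2) :=
  fun j =>
    if h : (j : ℕ) ≤ (i : ℕ) then ⟨(j : ℕ), by have := i.isLt; omega⟩
    else ⟨(j : ℕ) - 1, by have := j.isLt; omega⟩


lemma aux (N t : ℕ) (ht : t ≤ N) :
    (Finset.univ.filter (fun k : Fin N => (k : ℕ) < t)).card = t := by
  rw [Finset.card_filter, Fin.sum_univ_eq_sum_range (fun x => if x < t then 1 else 0),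
    ← Finset.card_filter]
  have : Finset.filter (fun x => x < t) (Finset.range N) = Finset.range t := by
    ext x; simp; omega
  rw [this, Finset.card_range]


theorem stmt5 {n : ℕ} (i : Fin (n + 2)) :
    E (Fin.succAbove i) = sigmaMap i := by
  funext j
  have key : ∀ k : Fin (n+1),
      ((Fin.succAbove i k : ℕ) < (j : ℕ)) ↔
      ((k : ℕ) < if (j:ℕ) ≤ (i:ℕ) then (j:ℕ) else (j:ℕ) - 1) := by
    intro k
    rw [Fin.succAbove]
    split_ifs with h1 h2 h2 <;>
      simp_all [Fin.lt_iff_val_lt_val, Fin.le_iff_val_le_val, Fin.val_succ] <;> omega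
  simp only [E, sigmaMap]
  split_ifs with h
  · apply Fin.ext
    simp only [Fin.val_mk]
    rw [Finset.filter_congr (fun k _ => by rw [key k, if_pos h])]
    exact aux _ _ (by have := i.isLt; omega)
  · apply Fin.ext
    simp only [Fin.val_mk]
    rw [Finset.filter_congr (fun k _ => by rw [key k, if_neg h])]
    exact aux _ _ (by have := j.isLt; omega)
end

section
/- There exists a faithful functor e : SimplexCategoryᵒᵖ ⥤ SimplexCategory such that e sends (the opposite of) the object [n] to [n+1] for every natural number n, and such that for every morphism φ : [n] ⟶ [m] of SimplexCategory with underlying monotone map f : Fin (n+1) → Fin (m+1), the morphism e.map φ.op : [m+1] ⟶ [n+1] has underlying map E f, i.e., the map sending i : Fin (m+2) to the number of k : Fin (n+1) with (f k : ℕ) < (i : ℕ). (Construction 7.2 and Proposition 7.3 of the paper.) -/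
/-!
Since `f` is monotone, the `k` with `f k < i` form an initial segment of `Fin n`, whose length is
`E f i`; hence `k < E f i ↔ f k < i`. This Galois-connection-like equivalence gives
`E (g ∘ f) = E f ∘ E g` at once, and it recovers `f` from `E f`, which is faithfulness.
-/

open CategoryTheory Finset

variable {n m l : ℕ}

/-- The map `E f` of the paper. -/
def finShift (f : Fin n →o Fin m) : Fin (m + 1) →o Fin (n + 1) where
  toFun i := ⟨#{k | (f k : ℕ) < i}, Nat.lt_succ_of_le <| (card_filter_le _ _).trans_eq
    (card_fin n)⟩
  monotone' _ _ hij := Fin.mk_le_mk.2 <| card_le_card <| monotone_filter_right _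
    fun _ _ hk => lt_of_lt_of_le hk hij

lemma finShift_apply (f : Fin n →o Fin m) (i : Fin (m + 1)) :
    (finShift f i : ℕ) = #{k | (f k : ℕ) < i} := rfl

lemma lt_finShift_iff (f : Fin n →o Fin m) (i : Fin (m + 1)) (k : Fin n) :
    (k : ℕ) < finShift f i ↔ (f k : ℕ) < i := by
  rw [finShift_apply]
  constructor
  · intro hk
    by_contra! hik
    have hsub : ({j | (f j : ℕ) < i} : Finset (Fin n)) ⊆ Iio k := fun j hj => by
      simp only [mem_filter, mem_univ, true_and] at hj
      exact mem_Iio.2 (lt_of_not_ge fun hkj => (hik.trans (f.monotone hkj)).not_gt hj)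
    exact (card_le_card hsub).trans_eq (Fin.card_Iio k) |>.not_gt hk
  · intro hik
    have hsub : Iic k ⊆ ({j | (f j : ℕ) < i} : Finset (Fin n)) := fun j hj => by
      simp only [mem_filter, mem_univ, true_and]
      exact lt_of_le_of_lt (f.monotone (mem_Iic.1 hj)) hik
    exact Nat.lt_of_succ_le <| (Fin.card_Iic k).symm.trans_le (card_le_card hsub)

lemma finShift_id (i : Fin (n + 1)) : finShift (OrderHom.id : Fin n →o Fin n) i = i := by
  ext
  refine eq_of_forall_lt_iff fun c => ?_
  by_cases hc : c < n
  · exact lt_finShift_iff OrderHom.id i ⟨c, hc⟩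
  · have := (finShift (OrderHom.id : Fin n →o Fin n) i).is_le
    have := i.is_le
    omega

lemma finShift_comp (g : Fin m →o Fin l) (f : Fin n →o Fin m) (i : Fin (l + 1)) :
    finShift (g.comp f) i = finShift f (finShift g i) :=
  Fin.ext <| congrArg card <| filter_congr (s := univ) fun k _ => (lt_finShift_iff g i (f k)).symm

lemma finShift_injective : Function.Injective (finShift : (Fin n →o Fin m) → _) := by
  intro f g hfg
  ext k
  refine eq_of_forall_gt_iff fun c => ?_
  by_cases hc : c < m + 1
  · rw [← lt_finShift_iff f ⟨c, hc⟩, ← lt_finShift_iff g ⟨c, hc⟩, hfg]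
  · have := (f k).is_lt
    have := (g k).is_lt
    omega

namespace SimplexCategory

/-- The functor `e` of the paper. -/
def opShift : SimplexCategoryᵒᵖ ⥤ SimplexCategory where
  obj X := mk (X.unop.len + 1)
  map φ := mkHom (finShift φ.unop.toOrderHom)
  map_id _ := Hom.ext _ _ <| OrderHom.ext _ _ <| funext finShift_id
  map_comp _ _ := Hom.ext _ _ <| OrderHom.ext _ _ <| funext <| finShift_comp _ _

instance : opShift.Faithful where
  map_injective h := Quiver.Hom.unop_inj <| Hom.ext _ _ <| finShift_injective <|
    congrArg Hom.toOrderHom h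

end SimplexCategory

theorem stmt7 :
    ∃ e : SimplexCategoryᵒᵖ ⥤ SimplexCategory,
      e.Faithful ∧
      (∀ n : ℕ, e.obj (Opposite.op (SimplexCategory.mk n)) = SimplexCategory.mk (n + 1)) ∧
      (∀ (n m : ℕ) (φ : SimplexCategory.mk n ⟶ SimplexCategory.mk m)
        (i : Fin ((e.obj (Opposite.op (SimplexCategory.mk m))).len + 1)),
        ((e.map φ.op).toOrderHom i : ℕ) =
          (Finset.univ.filter
            (fun k : Fin (n + 1) => (φ.toOrderHom k : ℕ) < (i : ℕ))).card) :=
  ⟨SimplexCategory.opShift, inferInstance, fun _ => rfl, fun _ _ _ _ => rfl⟩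
end

section
/- Let C be a category and let X : SimplexCategoryᵒᵖ ⥤ C be a simplicial object in C. Then there exists a cosimplicial object Y : SimplexCategory ⥤ C such that: (i) Y.obj [n] = X.obj (op [n+1]) for every natural number n; (ii) for every n and every i : Fin (n+2), the coface map Y.map (δ i) : Y.obj [n] ⟶ Y.obj [n+1] equals X.map ((σ i).op), where δ i : [n] ⟶ [n+1] and σ i : [n+2] ⟶ [n+1] are the face and degeneracy maps of SimplexCategory; (iii) for every n and every j : Fin (n+1), the codegeneracy map Y.map (σ j) : Y.obj [n+1] ⟶ Y.obj [n] equals X.map ((δ j.succ).op), where σ j : [n+1] ⟶ [n] and δ j.succ : [n+1] ⟶ [n+2]. (The paper's statement that 'inside every simplicial object sits a cosimplicial object', obtained by precomposing with the décalage-like functor e.) -/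
open CategoryTheory

theorem stmt8 {C : Type*} [Category C] (X : CategoryTheory.SimplicialObject C) :
    ∃ Y : CategoryTheory.CosimplicialObject C,
      ∃ h : ∀ n : ℕ, Y.obj (SimplexCategory.mk n) =
          X.obj (Opposite.op (SimplexCategory.mk (n + 1))),
        (∀ (n : ℕ) (i : Fin (n + 2)),
          Y.map (SimplexCategory.δ i) =
            eqToHom (h n) ≫ X.map (SimplexCategory.σ i).op ≫ eqToHom (h (n + 1)).symm) ∧
        (∀ (n : ℕ) (j : Fin (n + 1)),
          Y.map (SimplexCategory.σ j) =
            eqToHom (h (n + 1)) ≫ X.map (SimplexCategory.δ j.succ.castSucc).op ≫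
              eqToHom (h n).symm) := by
  refine ⟨SimplexCategory.II ⋙ X, fun _ => rfl, fun n i => ?_, fun n j => ?_⟩
  · exact (congrArg X.map (SimplexCategory.II_δ i)).trans
      ((Category.comp_id _).symm.trans (Category.id_comp _).symm)
  · exact (congrArg X.map (SimplexCategory.II_σ j)).trans
      ((Category.comp_id _).symm.trans (Category.id_comp _).symm)
end
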